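/- arXiv:2507.11388 — 7 statements merged into one kernel-verified Lean document; each statement's English description precedes it below -/
import Mathlib

section
/- Let T be a torsion abelian group with primary decomposition T = ⊕_{p prime} T_p, where T_p is the p-primary component of T. Then T is Bassian-finite if and only if each primary component T_p is Bassian-finite. -/
/-!
An injection of a direct summand `H` of `G` into a proper summand of `H` extends, by the identity
on a complement of `H`, to an injection of `G` into a proper summand of `G`; so direct summands of
Bassian-finite groups are Bassian-finite. In a torsion group `T` the elements killed by an integer
prime to `p` form a complement of `T_p`, which gives one direction.

Conversely, let `T = A ⊕ B` with `B ≠ 0` and `φ : T → A` injective. Since `B` is torsion, some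
`B ∩ T_p` is nonzero. Multiplying `a + b ∈ T_p` by a power of `p` shows that
`T_p = (A ∩ T_p) ⊕ (B ∩ T_p)`, and `φ` maps `T_p` injectively into `A ∩ T_p`.
-/

/-- An abelian group `G` is *Bassian-finite* if there is no injective homomorphism
from `G` into a proper direct summand of `G`. -/
def BassianFinite (G : Type*) [AddCommGroup G] : Prop :=
  ∀ A B : AddSubgroup G, IsCompl A B → B ≠ ⊥ → ∀ φ : G →+ A, ¬ Function.Injective φ

open AddSubgroup AddCommGroup Function

section

variable {G : Type*} [AddCommGroup G]

theorem BassianFinite.not_injective (hG : BassianFinite G) {A B : AddSubgroup G}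
    (hAB : IsCompl A B) (hB : B ≠ ⊥) {f : G →+ G} (hfA : ∀ x, f x ∈ A) : ¬ Injective f :=
  fun hf ↦ hG A B hAB hB (f.codRestrict A hfA) fun _ _ h ↦ hf (congrArg Subtype.val h)

theorem AddSubgroup.exists_add_eq_of_codisjoint {H K : AddSubgroup G} (h : Codisjoint H K)
    (x : G) : ∃ (y : H) (z : K), (y : G) + z = x :=
  mem_sup'.mp (h.eq_top ▸ mem_top x)

theorem AddSubgroup.isCompl_map_subtype_sup {H K : AddSubgroup G} (hHK : IsCompl H K)
    {A B : AddSubgroup H} (hAB : IsCompl A B) :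
    IsCompl (A.map H.subtype ⊔ K) (B.map H.subtype) := by
  refine ((disjoint_map H.subtype_injective hAB.symm.disjoint)
    |>.isCompl_sup_right_of_isCompl_sup_left ?_).symm
  rwa [← map_sup, hAB.symm.sup_eq_top, ← AddMonoidHom.range_eq_map, range_subtype]

theorem BassianFinite.of_isCompl (hG : BassianFinite G) {H K : AddSubgroup G}
    (hHK : IsCompl H K) : BassianFinite H := by
  intro A B hAB hB φ hφ
  let F : G →+ G := (LinearMap.ofIsCompl (toIntSubmodule.isCompl_iff.mp hHK)
    (H.subtype.comp (A.subtype.comp φ)).toIntLinearMap K.subtype.toIntLinearMap).toAddMonoidHom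
  have hF (y : H) (z : K) : F (y + z) = (φ y : H) + (z : G) := by
    rw [map_add]
    exact congrArg₂ (· + ·) (LinearMap.ofIsCompl_apply_left _ _)
      (LinearMap.ofIsCompl_apply_right _ _)
  have hFA (x : G) : F x ∈ A.map H.subtype ⊔ K := by
    obtain ⟨y, z, rfl⟩ := exists_add_eq_of_codisjoint hHK.codisjoint x
    rw [hF]
    exact add_mem (mem_sup_left (mem_map_of_mem _ (φ y).2)) (mem_sup_right z.2)
  refine hG.not_injective (isCompl_map_subtype_sup hHK hAB)
    ((map_eq_bot_iff_of_injective B H.subtype_injective).not.mpr hB) hFA ?_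
  rw [injective_iff_map_eq_zero]
  intro x hx
  obtain ⟨y, z, rfl⟩ := exists_add_eq_of_codisjoint hHK.codisjoint x
  rw [hF] at hx
  obtain ⟨hφy, hz⟩ := disjoint_iff_add_eq_zero.mp hHK.disjoint (φ y : H).2 z.2 hx
  have hy : y = 0 := (injective_iff_map_eq_zero φ).mp hφ y (by exact_mod_cast hφy)
  simp [hy, hz]

theorem Nat.Coprime.eq_zero_of_nsmul_eq_zero {M : Type*} [AddMonoid M] {a b : ℕ}
    (hab : a.Coprime b) {x : M}
    (ha : a • x = 0) (hb : b • x = 0) : x = 0 :=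
  AddMonoid.addOrderOf_eq_one_iff.mp <| Nat.dvd_one.mp <| hab.gcd_eq_one ▸
    Nat.dvd_gcd (addOrderOf_dvd_of_nsmul_eq_zero ha) (addOrderOf_dvd_of_nsmul_eq_zero hb)

theorem Nat.Coprime.exists_add_eq_of_mul_nsmul_eq_zero {a b : ℕ} (hab : a.Coprime b) {x : G}
    (hx : (a * b) • x = 0) : ∃ y z : G, a • y = 0 ∧ b • z = 0 ∧ y + z = x := by
  obtain ⟨u, v, huv⟩ := Nat.isCoprime_iff_coprime.mpr hab
  have hx' : ((a : ℤ) * b) • x = 0 := by exact_mod_cast hx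
  refine ⟨(v * b) • x, (u * a) • x, ?_, ?_, ?_⟩
  · rw [← natCast_zsmul, smul_smul, show (a : ℤ) * (v * b) = v * (a * b) by ring, mul_smul, hx',
      smul_zero]
  · rw [← natCast_zsmul, smul_smul, show (b : ℤ) * (u * a) = u * (a * b) by ring, mul_smul, hx',
      smul_zero]
  · rw [← add_zsmul, add_comm, huv, one_zsmul]

variable (G) in
def AddCommGroup.coprimeComponent (p : ℕ) [hp : Fact p.Prime] : AddSubgroup G where
  carrier := {x | ∃ m : ℕ, ¬ p ∣ m ∧ m • x = 0}
  zero_mem' := ⟨1, hp.out.not_dvd_one, nsmul_zero 1⟩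
  add_mem' := fun ⟨m, hm, hmx⟩ ⟨n, hn, hny⟩ ↦ ⟨m * n, hp.out.not_dvd_mul hm hn, by
    rw [nsmul_add, mul_nsmul, hmx, mul_nsmul', hny, nsmul_zero, nsmul_zero, add_zero]⟩
  neg_mem' := fun ⟨m, hm, hmx⟩ ↦ ⟨m, hm, by rw [smul_neg, hmx, neg_zero]⟩

theorem AddCommGroup.isCompl_primaryComponent_coprimeComponent (hG : IsAddTorsion G) (p : ℕ)
    [hp : Fact p.Prime] : IsCompl (primaryComponent G p) (coprimeComponent G p) := by
  have coprime_pow {m : ℕ} (k : ℕ) (hm : ¬ p ∣ m) : (p ^ k).Coprime m :=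
    .pow_left k (hp.out.coprime_iff_not_dvd.mpr hm)
  constructor
  · rw [disjoint_def]
    rintro x ⟨k, hk⟩ ⟨m, hm, hmx⟩
    exact (coprime_pow k hm).eq_zero_of_nsmul_eq_zero hk hmx
  · rw [codisjoint_iff_le_sup]
    intro x _
    obtain ⟨n, hn, hnx⟩ := isOfFinAddOrder_iff_nsmul_eq_zero.mp (hG x)
    have hm := Nat.not_dvd_ordCompl hp.out hn.ne'
    rw [← Nat.ordProj_mul_ordCompl_eq_self n p] at hnx
    obtain ⟨y, z, hy, hz, rfl⟩ := (coprime_pow _ hm).exists_add_eq_of_mul_nsmul_eq_zero hnx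
    exact add_mem_sup ⟨_, hy⟩ ⟨_, hm, hz⟩

theorem AddMonoidHom.map_mem_primaryComponent {H : Type*} [AddCommGroup H] (f : G →+ H)
    {p : ℕ} {x : G} (hx : x ∈ primaryComponent G p) : f x ∈ primaryComponent H p :=
  let ⟨k, hk⟩ := hx
  ⟨k, by rw [← map_nsmul, hk, map_zero]⟩

theorem IsCompl.addSubgroupOf_primaryComponent {A B : AddSubgroup G} (hAB : IsCompl A B)
    (p : ℕ) :
    IsCompl (A.addSubgroupOf (primaryComponent G p)) (B.addSubgroupOf (primaryComponent G p)) := by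
  constructor
  · rw [disjoint_def]
    intro x hxA hxB
    exact Subtype.ext (disjoint_def.mp hAB.disjoint hxA hxB)
  · rw [codisjoint_iff_le_sup]
    rintro ⟨x, k, hk⟩ -
    obtain ⟨a, b, rfl⟩ := exists_add_eq_of_codisjoint hAB.codisjoint x
    rw [nsmul_add] at hk
    obtain ⟨ha, hb⟩ :=
      disjoint_iff_add_eq_zero.mp hAB.disjoint (nsmul_mem a.2 _) (nsmul_mem b.2 _) hk
    exact mem_sup.mpr ⟨⟨a, k, ha⟩, a.2, ⟨b, k, hb⟩, b.2, rfl⟩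

theorem AddSubgroup.exists_prime_not_disjoint_primaryComponent (hG : IsAddTorsion G)
    {B : AddSubgroup G} (hB : B ≠ ⊥) : ∃ p, p.Prime ∧ ¬ Disjoint B (primaryComponent G p) := by
  obtain ⟨⟨x, hxB⟩, hx⟩ := ne_bot_iff_exists_ne_zero.mp hB
  have hx0 : x ≠ 0 := fun h ↦ hx (Subtype.ext h)
  obtain ⟨p, hp, hpx⟩ := Nat.exists_prime_and_dvd (mt AddMonoid.addOrderOf_eq_one_iff.mp hx0)
  have hord := addOrderOf_nsmul_addOrderOf_sub (hG x).addOrderOf_pos.ne' hpx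
  refine ⟨p, hp, fun hdis ↦ hp.one_lt.ne' ?_⟩
  rw [← hord, AddMonoid.addOrderOf_eq_one_iff]
  refine disjoint_def.mp hdis (nsmul_mem hxB _) (mem_primaryComponent.mpr ⟨1, ?_⟩)
  simpa only [pow_one, hord] using addOrderOf_nsmul_eq_zero ((addOrderOf x / p) • x)

theorem BassianFinite.of_forall_primaryComponent (hG : IsAddTorsion G)
    (h : ∀ p : ℕ, p.Prime → BassianFinite (primaryComponent G p)) : BassianFinite G := by
  intro A B hAB hB φ hφ
  obtain ⟨p, hp, hBp⟩ := exists_prime_not_disjoint_primaryComponent hG hB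
  let f : G →+ G := A.subtype.comp φ
  let fp : primaryComponent G p →+ primaryComponent G p :=
    (f.comp (primaryComponent G p).subtype).codRestrict _ fun x ↦ f.map_mem_primaryComponent x.2
  refine (h p hp).not_injective (hAB.addSubgroupOf_primaryComponent p)
    (addSubgroupOf_eq_bot.not.mpr hBp) (f := fp) (fun x ↦ (φ x).2) ?_
  intro x y hxy
  exact Subtype.ext <| hφ <| Subtype.ext (congrArg Subtype.val hxy :)

theorem BassianFinite.primaryComponent (h : BassianFinite G) (hG : IsAddTorsion G) (p : ℕ)
    [Fact p.Prime] : BassianFinite (AddCommGroup.primaryComponent G p) :=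
  h.of_isCompl (isCompl_primaryComponent_coprimeComponent hG p)

end

/-- A torsion abelian group is Bassian-finite if and only if each of its `p`-primary
components is Bassian-finite. -/
theorem bassianFinite_iff_forall_primaryComponent (T : Type*) [AddCommGroup T]
    (hT : AddMonoid.IsTorsion T) :
    BassianFinite T ↔
      ∀ (p : ℕ) (hp : Fact p.Prime), BassianFinite (AddCommGroup.primaryComponent T p) :=
  ⟨fun h _ _ ↦ h.primaryComponent hT _,
    fun h ↦ .of_forall_primaryComponent hT fun p hp ↦ h p ⟨hp⟩⟩
end

section
/- Let G be an abelian group with maximal torsion subgroup T (the subgroup of all elements of finite order). If both T and G/T are Bassian-finite, then G is Bassian-finite. -/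
/-- If the maximal torsion subgroup `T` of `G` and the quotient `G/T` are both
Bassian-finite, then so is `G`. -/
theorem BassianFinite.of_torsion_of_quotient (G : Type*) [AddCommGroup G]
    (hT : BassianFinite (AddCommGroup.torsion G))
    (hQ : BassianFinite (G ⧸ AddCommGroup.torsion G)) :
    BassianFinite G := by
  intro A B hcompl hB φ hφ
  set T := AddCommGroup.torsion G with hTdef
  -- φ maps torsion to torsion
  have hφtor : ∀ g : G, g ∈ T → ((φ g : G) ∈ T) := by
    intro g hg
    exact ((A.subtype.comp φ).isOfFinAddOrder hg : IsOfFinAddOrder ((φ g : G)))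
  have hdisj : A ⊓ B = ⊥ := hcompl.inf_eq_bot
  -- decomposition of torsion elements: components are torsion
  have hsplit : ∀ t ∈ T, ∃ a ∈ A ⊓ T, ∃ b ∈ B ⊓ T, t = a + b := by
    intro t ht
    have : t ∈ A ⊔ B := by rw [hcompl.sup_eq_top]; trivial
    obtain ⟨a, ha, b, hb, rfl⟩ := AddSubgroup.mem_sup.mp this
    obtain ⟨n, hn, hnt⟩ := isOfFinAddOrder_iff_nsmul_eq_zero.mp ht
    have h1 : n • a + n • b = 0 := by rw [← smul_add, hnt]
    have h2 : n • a ∈ A ⊓ B := by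
      refine ⟨AddSubgroup.nsmul_mem A ha n, ?_⟩
      have : n • a = -(n • b) := eq_neg_of_add_eq_zero_left h1
      rw [this]; exact B.neg_mem (AddSubgroup.nsmul_mem B hb n)
    rw [hdisj, AddSubgroup.mem_bot] at h2
    have hbz : n • b = 0 := by rwa [h2, zero_add] at h1
    have hat : a ∈ T := isOfFinAddOrder_iff_nsmul_eq_zero.mpr ⟨n, hn, h2⟩
    have hbt : b ∈ T := isOfFinAddOrder_iff_nsmul_eq_zero.mpr ⟨n, hn, hbz⟩
    exact ⟨a, ⟨ha, hat⟩, b, ⟨hb, hbt⟩, rfl⟩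
  -- subgroups of T
  set A₁ : AddSubgroup T := A.comap T.subtype with hA₁
  set B₁ : AddSubgroup T := B.comap T.subtype with hB₁
  by_cases hB₁bot : B₁ = ⊥
  · -- Case 2: no torsion in B, so T ≤ A; work in the quotient
    have hTA : ∀ t ∈ T, t ∈ A := by
      intro t ht
      obtain ⟨a, ⟨ha, hat⟩, b, ⟨hb, hbt⟩, rfl⟩ := hsplit t ht
      have : (⟨b, hbt⟩ : T) ∈ B₁ := hb
      rw [hB₁bot, AddSubgroup.mem_bot] at this
      have hb0 : b = 0 := congrArg Subtype.val this
      rw [hb0, add_zero]; exact ha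
    set π : G →+ G ⧸ T := QuotientAddGroup.mk' T with hπ
    set A₂ : AddSubgroup (G ⧸ T) := A.map π with hA₂
    set B₂ : AddSubgroup (G ⧸ T) := B.map π with hB₂
    have hkerT : ∀ g : G, π g = 0 ↔ g ∈ T := by
      intro g; exact QuotientAddGroup.eq_zero_iff g
    have hcompl₂ : IsCompl A₂ B₂ := by
      constructor
      · rw [disjoint_iff, eq_bot_iff]
        rintro q ⟨⟨a, ha, rfl⟩, b, hb, hab⟩
        have : π (a - b) = 0 := by rw [map_sub, hab, sub_self]
        have habT : a - b ∈ T := (hkerT _).mp this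
        have hbA : b ∈ A := by
          have := hTA _ habT
          have : b = a - (a - b) := by abel
          rw [this]; exact sub_mem ha (hTA _ habT)
        have : b ∈ A ⊓ B := ⟨hbA, hb⟩
        rw [hdisj, AddSubgroup.mem_bot] at this
        rw [AddSubgroup.mem_bot, ← hab, this, map_zero]
      · rw [codisjoint_iff, eq_top_iff]
        intro q _
        obtain ⟨g, rfl⟩ := QuotientAddGroup.mk'_surjective T q
        have : g ∈ A ⊔ B := by rw [hcompl.sup_eq_top]; trivial
        obtain ⟨a, ha, b, hb, rfl⟩ := AddSubgroup.mem_sup.mp this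
        rw [map_add]
        exact AddSubgroup.add_mem_sup (AddSubgroup.mem_map_of_mem π ha)
          (AddSubgroup.mem_map_of_mem π hb)
    have hB₂bot : B₂ ≠ ⊥ := by
      intro h
      apply hB
      rw [eq_bot_iff]
      intro b hb
      have : π b ∈ B₂ := AddSubgroup.mem_map_of_mem π hb
      rw [h, AddSubgroup.mem_bot] at this
      have hbT : b ∈ T := (hkerT b).mp this
      have : (⟨b, hbT⟩ : T) ∈ B₁ := hb
      rw [hB₁bot, AddSubgroup.mem_bot] at this
      exact AddSubgroup.mem_bot.mpr (congrArg Subtype.val this)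
    -- induced map on the quotient
    set f : G →+ A₂ := {
      toFun := fun g => ⟨π (φ g), AddSubgroup.mem_map_of_mem π (φ g).2⟩
      map_zero' := by ext; simp
      map_add' := by intro x y; ext; simp } with hf
    have hfT : ∀ g ∈ T, f g = 0 := by
      intro g hg
      have : (φ g : G) ∈ T := hφtor g hg
      ext
      exact (hkerT _).mpr this
    set ψ : G ⧸ T →+ A₂ := QuotientAddGroup.lift T f hfT with hψ
    have hψinj : Function.Injective ψ := by
      rw [injective_iff_map_eq_zero]
      intro q hq
      obtain ⟨g, rfl⟩ := QuotientAddGroup.mk'_surjective T q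
      have hfg : f g = 0 := hq
      have : π (φ g) = 0 := congrArg Subtype.val hfg
      have hφgT : (φ g : G) ∈ T := (hkerT _).mp this
      obtain ⟨n, hn, hnφ⟩ := isOfFinAddOrder_iff_nsmul_eq_zero.mp hφgT
      have : (φ (n • g) : G) = 0 := by rw [map_nsmul]; exact_mod_cast hnφ
      have hng : n • g = 0 := by
        apply hφ
        ext
        simpa using this
      have hgT : g ∈ T := isOfFinAddOrder_iff_nsmul_eq_zero.mpr ⟨n, hn, hng⟩
      exact (hkerT g).mpr hgT
    exact hQ A₂ B₂ hcompl₂ hB₂bot ψ hψinj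
  · -- Case 1: B contains nonzero torsion; restrict to T
    have hcompl₁ : IsCompl A₁ B₁ := by
      constructor
      · rw [disjoint_iff, eq_bot_iff]
        rintro ⟨t, ht⟩ ⟨h1, h2⟩
        have : t ∈ A ⊓ B := ⟨h1, h2⟩
        rw [hdisj, AddSubgroup.mem_bot] at this
        rw [AddSubgroup.mem_bot]; exact Subtype.ext this
      · rw [codisjoint_iff, eq_top_iff]
        rintro ⟨t, ht⟩ _
        obtain ⟨a, ⟨ha, hat⟩, b, ⟨hb, hbt⟩, hteq⟩ := hsplit t ht
        rw [AddSubgroup.mem_sup]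
        refine ⟨⟨a, hat⟩, ha, ⟨b, hbt⟩, hb, ?_⟩
        exact Subtype.ext hteq.symm
    set ψ : T →+ A₁ := {
      toFun := fun t => ⟨⟨(φ t : G), hφtor t t.2⟩, (φ (t : G)).2⟩
      map_zero' := by ext; simp
      map_add' := by intro x y; ext; simp } with hψ
    have hψinj : Function.Injective ψ := by
      intro x y hxy
      have h1 : (φ (x : G) : G) = (φ (y : G) : G) :=
        congrArg (fun z : A₁ => ((z : T) : G)) hxy
      exact Subtype.ext (hφ (Subtype.ext h1))
    exact hT A₁ B₁ hcompl₁ hB₁bot ψ hψinj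
end

section
/- Let G = ⊕_{i∈I} A_i be a completely decomposable torsion-free abelian group, where each A_i is torsion-free of rank 1. Then the following are equivalent: (a) G is Bassian-finite; (b) G satisfies the ascending type condition, i.e., there is no sequence (i_k)_{k∈ℕ} of pairwise distinct indices in I such that for each k there exists an injective homomorphism A_{i_k} → A_{i_{k+1}}; (c) G is relatively co-Hopfian. -/
open DirectSum TensorProduct

/-- An abelian group `G` is *relatively co-Hopfian* if the image of every injective
endomorphism of `G` is an essential subgroup of `G`. -/
def RelativelyCoHopfian (G : Type*) [AddCommGroup G] : Prop :=
  ∀ φ : G →+ G, Function.Injective φ → ∀ B : AddSubgroup G, B ≠ ⊥ → φ.range ⊓ B ≠ ⊥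

open Function Set

/-!
Choose injective `χ i : A i →+ ℚ`; they embed `G = ⨁ i, A i` into `I →₀ ℚ` with a nonzero
multiple of every vector in the image, and turn an injective endomorphism `φ` of `G` into an
injective linear endomorphism `T` of `I →₀ ℚ`. A nonzero homomorphism between subgroups of `ℚ`
is injective, so `T` is triangular for the type preorder. Under the ascending type condition this
preorder has finite classes and no strictly ascending chains; well-founded induction over its
up-sets, with an injective-hence-surjective finite-dimensional step on each class, shows that `T`
is surjective, so every element of `G` has a nonzero multiple in `φ(G)`. Conversely, an injective
ascending chain `f` gives an injective shift endomorphism of `G` with image in the summand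
complementary to `A (f 0)`, and an image inside a proper summand is never essential.
-/

theorem exists_injective_addMonoidHom_rat {A : Type*} [AddCommGroup A] [IsAddTorsionFree A]
    (hrk : Module.rank ℚ (ℚ ⊗[ℤ] A) = 1) : ∃ χ : A →+ ℚ, Injective χ := by
  obtain ⟨e⟩ := nonempty_linearEquiv_of_lift_rank_eq (R := ℚ) (M := ℚ ⊗[ℤ] A) (M' := ℚ)
    (by simp [hrk])
  exact ⟨(e : ℚ ⊗[ℤ] A →+ ℚ).comp (TensorProduct.mk ℤ ℚ A 1).toAddMonoidHom,
    e.injective.comp (Module.Flat.tensorProduct_mk_injective ℤ A ℚ)⟩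

theorem nontrivial_of_rank_rat_tensor_eq_one {A : Type*} [AddCommGroup A]
    (hrk : Module.rank ℚ (ℚ ⊗[ℤ] A) = 1) : Nontrivial A := by
  by_contra h
  have : Subsingleton A := not_nontrivial_iff_subsingleton.1 h
  rw [rank_subsingleton'] at hrk
  exact zero_ne_one hrk

theorem AddMonoidHom.exists_eq_smul_of_injective_rat {A V : Type*} [AddCommGroup A]
    [AddCommGroup V] [Module ℚ V] {χ : A →+ ℚ} (hχ : Injective χ) (ψ : A →+ V) :
    ∃ v : V, ∀ a, ψ a = χ a • v := by
  rcases subsingleton_or_nontrivial A with hA | hA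
  · exact ⟨0, fun a => by rw [Subsingleton.elim a 0, map_zero, smul_zero]⟩
  obtain ⟨a₀, ha₀⟩ := exists_ne (0 : A)
  have hc : χ a₀ ≠ 0 := fun h => ha₀ (hχ (h.trans (map_zero χ).symm))
  refine ⟨(χ a₀)⁻¹ • ψ a₀, fun a => ?_⟩
  set q := χ a / χ a₀ with hq
  have hnum : (q.den : ℚ) * (χ a * (χ a₀)⁻¹) = q.num := by
    rw [← div_eq_mul_inv, ← hq, mul_comm, Rat.mul_den_eq_num]
  -- `χ` is injective, so `a` and `a₀` satisfy the same integral relation as `χ a` and `χ a₀`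
  have hrel : (q.den : ℤ) • a = q.num • a₀ := hχ <| by
    rw [map_zsmul, map_zsmul, zsmul_eq_mul, zsmul_eq_mul, ← hnum]
    push_cast; field_simp
  apply smul_right_injective V (show (q.den : ℚ) ≠ 0 by positivity)
  have h := congrArg ψ hrel
  rw [map_zsmul, map_zsmul, ← Int.cast_smul_eq_zsmul ℚ, ← Int.cast_smul_eq_zsmul ℚ] at h
  simp only [smul_smul, hnum, ← h]
  norm_cast

namespace Finsupp

variable {K I : Type*} [Field K]

theorem supported_union_le_map_of_injective {T : (I →₀ K) →ₗ[K] (I →₀ K)} (hT : Injective T)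
    {C W : Set I} (hC : C.Finite) (hCW : Disjoint C W)
    (hinv : supported K K (C ∪ W) ≤ (supported K K (C ∪ W)).comap T)
    (hW : supported K K W ≤ (supported K K W).map T) :
    supported K K (C ∪ W) ≤ (supported K K (C ∪ W)).map T := by
  classical
  have : Finite C := hC.to_subtype
  have : Module.Finite K (supported K K C) := .equiv (supportedEquivFinsupp C).symm
  have hC_le : supported K K C ≤ supported K K (C ∪ W) := supported_mono subset_union_left
  have hW_le : supported K K W ≤ supported K K (C ∪ W) := supported_mono subset_union_right
  have hoff : ∀ x ∈ supported K K (C ∪ W), x.filter (· ∈ C) = 0 → x ∈ supported K K W := by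
    intro x hx hxC j hj
    refine (hx hj).resolve_left fun hjC => mem_support_iff.1 hj ?_
    rw [← filter_apply_pos (· ∈ C) x hjC, hxC, coe_zero, Pi.zero_apply]
  -- `T` compressed to the finite block `C` is injective, because `W ⊆ T(W)` and `T` is injective
  let S := restrictDom K K C ∘ₗ T ∘ₗ (supported K K C).subtype
  have hS : Injective S := by
    intro v₁ v₂ h
    have hv : (v₁ - v₂ : I →₀ K) ∈ supported K K C := sub_mem v₁.2 v₂.2
    replace h : (T (v₁ - v₂)).filter (· ∈ C) = 0 := by
      rw [map_sub, filter_sub, sub_eq_zero, ← restrictDom_apply (R := K),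
        ← restrictDom_apply (R := K)]
      exact congrArg Subtype.val h
    obtain ⟨w, hw, hTw⟩ := hW (hoff _ (hinv (hC_le hv)) h)
    have hvw : (v₁ - v₂ : I →₀ K) = w := hT hTw.symm
    have := (disjoint_supported_supported (R := K) (M := K) hCW).le_bot ⟨hv, hvw ▸ hw⟩
    exact Subtype.ext (sub_eq_zero.1 this)
  intro u hu
  obtain ⟨v, hv⟩ := LinearMap.injective_iff_surjective.1 hS (restrictDom K K C u)
  have hrest : (u - T v).filter (· ∈ C) = 0 := by
    rw [filter_sub, sub_eq_zero, ← restrictDom_apply (R := K), ← restrictDom_apply (R := K), ← hv]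
    rfl
  obtain ⟨w, hw, hTw⟩ := hW (hoff (u - T v) (sub_mem hu (hinv (hC_le v.2))) hrest)
  exact ⟨v + w, add_mem (hC_le v.2) (hW_le hw), by rw [map_add, hTw, add_sub_cancel]⟩

theorem supported_le_comap_of_isUpperSet [Preorder I] {T : (I →₀ K) →ₗ[K] (I →₀ K)}
    (hT : ∀ i, T (single i 1) ∈ supported K K (Ici i)) {s : Set I} (hs : IsUpperSet s) :
    supported K K s ≤ (supported K K s).comap T := by
  refine (supported_eq_span_single K s).le.trans (Submodule.span_le.2 ?_)
  rintro _ ⟨i, hi, rfl⟩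
  exact supported_mono (hs.Ici_subset hi) (hT i)

theorem surjective_of_injective_of_mem_supported_Ici [Preorder I] [WellFoundedGT I]
    (hfin : ∀ i : I, {j | i ≤ j ∧ j ≤ i}.Finite) {T : (I →₀ K) →ₗ[K] (I →₀ K)} (hT : Injective T)
    (hTr : ∀ i, T (single i 1) ∈ supported K K (Ici i)) : Surjective T := by
  have key : ∀ i, supported K K (Ici i) ≤ (supported K K (Ici i)).map T := by
    intro i
    induction i using WellFoundedGT.induction with
    | _ i IH =>
    have hIci : Ici i = {j | i ≤ j ∧ j ≤ i} ∪ Ioi i := by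
      ext j; simp only [mem_Ici, mem_union, mem_ofPred_eq, mem_Ioi, lt_iff_le_not_ge]; tauto
    have hW : supported K K (Ioi i) ≤ (supported K K (Ioi i)).map T := by
      refine (supported_eq_span_single K (Ioi i)).le.trans (Submodule.span_le.2 ?_)
      rintro _ ⟨j, hj, rfl⟩
      exact Submodule.map_mono (supported_mono (Ici_subset_Ioi.2 hj))
        (IH j hj (single_mem_supported K 1 self_mem_Ici))
    rw [hIci]
    refine supported_union_le_map_of_injective hT (hfin i)
      (disjoint_left.2 fun j hj hj' => not_le_of_gt hj' hj.2) ?_ hW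
    rw [← hIci]
    exact supported_le_comap_of_isUpperSet hTr (isUpperSet_Ici i)
  rw [← LinearMap.range_eq_top, eq_top_iff, ← supported_univ, supported_eq_span_single,
    Submodule.span_le]
  rintro _ ⟨i, -, rfl⟩
  obtain ⟨v, -, hv⟩ := key i (single_mem_supported K 1 self_mem_Ici)
  exact ⟨v, hv⟩

end Finsupp

section Preorder

variable {α : Type*} [Preorder α]

theorem wellFoundedGT_of_not_exists_injective_chain
    (h : ¬ ∃ f : ℕ → α, Injective f ∧ ∀ k, f k ≤ f (k + 1)) : WellFoundedGT α := by
  rw [WellFoundedGT, isWellFounded_iff, RelEmbedding.wellFounded_iff_isEmpty]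
  exact ⟨fun f => h ⟨f, f.injective, fun k => (f.map_rel_iff.2 k.lt_succ_self).le⟩⟩

theorem finite_setOf_le_and_ge_of_not_exists_injective_chain
    (h : ¬ ∃ f : ℕ → α, Injective f ∧ ∀ k, f k ≤ f (k + 1)) (a : α) :
    {b | a ≤ b ∧ b ≤ a}.Finite := by
  by_contra hinf
  let f := Set.Infinite.natEmbedding _ hinf
  exact h ⟨fun k => f k, Subtype.val_injective.comp f.injective,
    fun k => (f k).2.2.trans (f (k + 1)).2.1⟩

end Preorder

theorem AddMonoidHom.isCompl_ker_range_of_leftInverse {G H : Type*} [AddCommGroup G]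
    [AddGroup H] {π : G →+ H} {s : H →+ G} (h : LeftInverse π s) : IsCompl π.ker s.range := by
  refine ⟨disjoint_iff_inf_le.2 ?_, codisjoint_iff_le_sup.2 fun x _ => ?_⟩
  · intro x hx
    obtain ⟨hx, y, rfl⟩ := AddSubgroup.mem_inf.1 hx
    rw [AddMonoidHom.mem_ker, h y] at hx
    rw [hx, map_zero]
    exact zero_mem _
  · rw [← sub_add_cancel x (s (π x))]
    refine AddSubgroup.add_mem_sup ?_ ⟨π x, rfl⟩
    rw [AddMonoidHom.mem_ker, map_sub, h, sub_self]

theorem RelativelyCoHopfian.bassianFinite {G : Type*} [AddCommGroup G]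
    (h : RelativelyCoHopfian G) : BassianFinite G := by
  intro A B hAB hB φ hφ
  refine h (A.subtype.comp φ) (Subtype.val_injective.comp hφ) B hB (eq_bot_iff.2 ?_)
  rintro _ ⟨⟨y, rfl⟩, hyB⟩
  exact hAB.disjoint.le_bot ⟨(φ y).2, hyB⟩

namespace DirectSum

variable {I : Type*} {A : I → Type*} [∀ i, AddCommGroup (A i)]

/-- On rank-one torsion-free groups this is the order of types. -/
abbrev embeddingPreorder (A : I → Type*) [∀ i, AddCommGroup (A i)] : Preorder I where
  le i j := ∃ ψ : A i →+ A j, Injective ψ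
  le_refl i := ⟨.id _, injective_id⟩
  le_trans _ _ _ := fun ⟨ψ, hψ⟩ ⟨ψ', hψ'⟩ => ⟨ψ'.comp ψ, hψ'.comp hψ⟩

section ratCoords

variable [DecidableEq I] (χ : ∀ i, A i →+ ℚ)

noncomputable def ratCoords : (⨁ i, A i) →+ (I →₀ ℚ) :=
  toAddMonoid fun i => (Finsupp.singleAddHom i).comp (χ i)

theorem ratCoords_of (i : I) (a : A i) : ratCoords χ (of A i a) = Finsupp.single i (χ i a) :=
  toAddMonoid_of _ i a

theorem ratCoords_apply (g : ⨁ i, A i) (j : I) : ratCoords χ g j = χ j (g j) := by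
  induction g using DirectSum.induction_on with
  | zero => simp
  | of i a =>
    rw [ratCoords_of]
    by_cases h : i = j
    · subst h; simp
    · rw [Finsupp.single_eq_of_ne' h, of_eq_of_ne _ _ _ (Ne.symm h), map_zero]
  | add x y hx hy => simp [hx, hy]

variable {χ} (hχ : ∀ i, Injective (χ i))
include hχ

theorem ratCoords_injective : Injective (ratCoords χ) := by
  refine (injective_iff_map_eq_zero _).2 fun g hg => DFinsupp.ext fun j => hχ j ?_
  rw [← ratCoords_apply, hg, Finsupp.zero_apply, DFinsupp.zero_apply, map_zero]

theorem exists_zsmul_mem_range_ratCoords [∀ i, Nontrivial (A i)] (x : I →₀ ℚ) :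
    ∃ N : ℤ, N ≠ 0 ∧ N • x ∈ (ratCoords χ).range := by
  induction x using Finsupp.induction_linear with
  | zero => exact ⟨1, one_ne_zero, by rw [smul_zero]; exact zero_mem _⟩
  | add x y hx hy =>
    obtain ⟨N₁, hN₁, hx⟩ := hx
    obtain ⟨N₂, hN₂, hy⟩ := hy
    refine ⟨N₁ * N₂, mul_ne_zero hN₁ hN₂, ?_⟩
    rw [smul_add, mul_comm, mul_smul, mul_comm, mul_smul]
    exact add_mem (zsmul_mem hx _) (zsmul_mem hy _)
  | single i q =>
    obtain ⟨a₀, ha₀⟩ := exists_ne (0 : A i)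
    have hc : χ i a₀ ≠ 0 := fun h => ha₀ (hχ i (h.trans (map_zero _).symm))
    set r := q / χ i a₀
    refine ⟨r.den, by positivity, of A i (r.num • a₀), ?_⟩
    rw [ratCoords_of, Finsupp.smul_single, map_zsmul, zsmul_eq_mul, ← Rat.mul_den_eq_num]
    congr 1
    rw [zsmul_eq_mul, mul_right_comm, div_mul_cancel₀ q hc, mul_comm, Int.cast_natCast]

theorem exists_linearMap_comp_ratCoords (φ : (⨁ i, A i) →+ ⨁ i, A i) :
    ∃ T : (I →₀ ℚ) →ₗ[ℚ] I →₀ ℚ, (∀ g, T (ratCoords χ g) = ratCoords χ (φ g)) ∧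
      ∀ i, T (Finsupp.single i 1) ∈
        Finsupp.supported ℚ ℚ {j | ∃ ψ : A i →+ A j, Injective ψ} := by
  choose v hv using fun i =>
    AddMonoidHom.exists_eq_smul_of_injective_rat (hχ i) ((ratCoords χ).comp (φ.comp (of A i)))
  simp only [AddMonoidHom.comp_apply] at hv
  refine ⟨Finsupp.linearCombination ℚ v, fun g => ?_, fun i => ?_⟩
  · induction g using DirectSum.induction_on with
    | zero => simp
    | of i a => rw [ratCoords_of, Finsupp.linearCombination_single, ← hv]
    | add x y hx hy => simp only [map_add, hx, hy]
  · rw [Finsupp.linearCombination_single, one_smul, Finsupp.mem_supported]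
    intro j hj
    have hcoord : ∀ a, χ j (φ (of A i a) j) = χ i a * v i j := fun a => by
      rw [← ratCoords_apply, hv, Finsupp.smul_apply, smul_eq_mul]
    refine ⟨(DFinsupp.evalAddMonoidHom j).comp (φ.comp (of A i)), fun a b hab => hχ i ?_⟩
    refine mul_right_cancel₀ (Finsupp.mem_support_iff.1 hj) ?_
    rw [← hcoord, ← hcoord]
    exact congrArg (χ j) hab

end ratCoords

theorem not_bassianFinite_of_injective_reindex {σ : I → I} (hσ : Injective σ)
    (ρ : ∀ i, A i →+ A (σ i)) (hρ : ∀ i, Injective (ρ i)) {j₀ : I} (hj₀ : j₀ ∉ range σ)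
    [Nontrivial (A j₀)] : ¬ BassianFinite (⨁ i, A i) := by
  classical
  let Φ : (⨁ i, A i) →+ ⨁ i, A i := toAddMonoid fun i => (of A (σ i)).comp (ρ i)
  have hΦ_of : ∀ i a, Φ (of A i a) = of A (σ i) (ρ i a) := fun i a => toAddMonoid_of _ i a
  have hΦσ : ∀ g i, Φ g (σ i) = ρ i (g i) := by
    intro g i
    induction g using DirectSum.induction_on with
    | zero => simp
    | of i' a =>
      rw [hΦ_of]
      by_cases h : i' = i
      · subst h; simp
      · rw [of_eq_of_ne _ _ _ (hσ.ne (Ne.symm h)), of_eq_of_ne _ _ _ (Ne.symm h), map_zero]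
    | add x y hx hy => simp [hx, hy]
  have hΦj₀ : ∀ g, Φ g j₀ = 0 := by
    intro g
    induction g using DirectSum.induction_on with
    | zero => simp
    | of i a => rw [hΦ_of]; exact of_eq_of_ne _ _ _ fun h => hj₀ ⟨i, h.symm⟩
    | add x y hx hy => simp [hx, hy]
  let π : (⨁ i, A i) →+ A j₀ := DFinsupp.evalAddMonoidHom (β := A) j₀
  have hπ : LeftInverse π (of A j₀) := fun a => of_eq_same j₀ a
  intro hBF
  refine hBF π.ker (of A j₀).range (AddMonoidHom.isCompl_ker_range_of_leftInverse hπ) ?_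
    (Φ.codRestrict π.ker hΦj₀) fun g g' h => ?_
  · obtain ⟨a, ha⟩ := exists_ne (0 : A j₀)
    exact fun h => ha <| of_injective j₀ <|
      ((AddSubgroup.eq_bot_iff_forall _).1 h _ ⟨a, rfl⟩).trans (map_zero _).symm
  · have h' : Φ g = Φ g' := congrArg Subtype.val h
    exact DFinsupp.ext fun i => hρ i (by rw [← hΦσ, ← hΦσ, h'])

theorem not_bassianFinite_of_exists_chain {f : ℕ → I} (hf : Injective f) [Nontrivial (A (f 0))]
    (hψ : ∀ k, ∃ ψ : A (f k) →+ A (f (k + 1)), Injective ψ) : ¬ BassianFinite (⨁ i, A i) := by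
  let σ : I → I := extend f (fun k => f (k + 1)) id
  have hσf : ∀ k, σ (f k) = f (k + 1) := hf.extend_apply _ _
  have hσ : ∀ i, (¬ ∃ k, f k = i) → σ i = i := fun i hi => extend_apply' _ _ _ hi
  have hρ : ∀ i, ∃ ρ : A i →+ A (σ i), Injective ρ := by
    intro i
    by_cases hi : ∃ k, f k = i
    · obtain ⟨k, rfl⟩ := hi
      rw [hσf]
      exact hψ k
    · rw [hσ i hi]
      exact ⟨.id _, injective_id⟩
  choose ρ hρ using hρ
  refine not_bassianFinite_of_injective_reindex (j₀ := f 0) (fun i i' h => ?_) ρ hρ ?_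
  · rcases em (∃ k, f k = i) with ⟨k, rfl⟩ | hi <;>
      rcases em (∃ k, f k = i') with ⟨k', rfl⟩ | hi'
    · rw [hσf, hσf] at h
      exact congrArg f (Nat.succ_injective (hf h))
    · rw [hσf, hσ _ hi'] at h
      exact absurd ⟨k + 1, h⟩ hi'
    · rw [hσ _ hi, hσf] at h
      exact absurd ⟨k' + 1, h.symm⟩ hi
    · rwa [hσ _ hi, hσ _ hi'] at h
  · rintro ⟨i, hi⟩
    rcases em (∃ k, f k = i) with ⟨k, rfl⟩ | hi'
    · rw [hσf] at hi
      exact k.succ_ne_zero (hf hi)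
    · rw [hσ _ hi'] at hi
      exact hi' ⟨0, hi.symm⟩

theorem relativelyCoHopfian_of_not_exists_chain [∀ i, Nontrivial (A i)] {χ : ∀ i, A i →+ ℚ}
    (hχ : ∀ i, Injective (χ i))
    (hchain : ¬ ∃ f : ℕ → I, Injective f ∧ ∀ k, ∃ ψ : A (f k) →+ A (f (k + 1)), Injective ψ) :
    RelativelyCoHopfian (⨁ i, A i) := by
  classical
  let := embeddingPreorder A
  have : WellFoundedGT I := wellFoundedGT_of_not_exists_injective_chain hchain
  intro φ hφ B hB
  obtain ⟨T, hTφ, hT_Ici⟩ := exists_linearMap_comp_ratCoords hχ φ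
  have hT : Injective T := by
    refine (injective_iff_map_eq_zero T).2 fun x hx => ?_
    obtain ⟨N, hN, g, hg⟩ := exists_zsmul_mem_range_ratCoords hχ x
    have hφg : φ g = 0 := ratCoords_injective hχ <| by
      rw [← hTφ, hg, map_zsmul, hx, smul_zero, map_zero]
    have hN0 : N • x = 0 := by rw [← hg, hφ (hφg.trans (map_zero φ).symm), map_zero]
    exact (smul_eq_zero.1 hN0).resolve_left hN
  have hTsurj := Finsupp.surjective_of_injective_of_mem_supported_Ici
    (finite_setOf_le_and_ge_of_not_exists_injective_chain hchain) hT hT_Ici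
  obtain ⟨b, hbB, hb0⟩ := B.bot_or_exists_ne_zero.resolve_left hB
  obtain ⟨x, hx⟩ := hTsurj (ratCoords χ b)
  obtain ⟨N, hN, g, hg⟩ := exists_zsmul_mem_range_ratCoords hχ x
  have hφg : φ g = N • b := ratCoords_injective hχ (by rw [← hTφ, hg, map_zsmul, hx, map_zsmul])
  have hNb : N • b ≠ 0 := by
    rw [Ne, ← (ratCoords_injective hχ).eq_iff, map_zsmul, map_zero, smul_eq_zero, not_or,
      (ratCoords_injective hχ).eq_iff' (map_zero _)]
    exact ⟨hN, hb0⟩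
  exact fun h => hNb ((AddSubgroup.eq_bot_iff_forall _).1 h _ ⟨⟨g, hφg⟩, zsmul_mem hbB N⟩)

end DirectSum

/-- For a completely decomposable torsion-free abelian group `G = ⨁_{i ∈ I} A i`,
with each `A i` torsion-free of rank 1, the following are equivalent:
(a) `G` is Bassian-finite;
(b) `G` satisfies the ascending type condition: there is no sequence of pairwise
distinct indices `i₀, i₁, i₂, …` with an injective homomorphism
`A (i k) → A (i (k+1))` for every `k`;
(c) `G` is relatively co-Hopfian. -/
theorem completelyDecomposable_bassianFinite_tfae (I : Type*) (A : I → Type*)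
    [∀ i, AddCommGroup (A i)]
    (htf : ∀ i, ∀ g : A i, g ≠ 0 → ¬ IsOfFinAddOrder g)
    (hrk : ∀ i, Module.rank ℚ (ℚ ⊗[ℤ] A i) = 1) :
    List.TFAE
      [BassianFinite (⨁ i, A i),
       ¬ ∃ f : ℕ → I, Function.Injective f ∧
          ∀ k : ℕ, ∃ ψ : A (f k) →+ A (f (k + 1)), Function.Injective ψ,
       RelativelyCoHopfian (⨁ i, A i)] := by
  have : ∀ i, IsAddTorsionFree (A i) := fun i => .of_not_isOfFinAddOrder (htf i)
  have : ∀ i, Nontrivial (A i) := fun i => nontrivial_of_rank_rat_tensor_eq_one (hrk i)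
  choose χ hχ using fun i => exists_injective_addMonoidHom_rat (A := A i) (hrk i)
  tfae_have 1 → 2 := fun h ⟨f, hf, hψ⟩ => not_bassianFinite_of_exists_chain hf hψ h
  tfae_have 2 → 3 := relativelyCoHopfian_of_not_exists_chain hχ
  tfae_have 3 → 1 := RelativelyCoHopfian.bassianFinite
  tfae_finish
end

section
/- There exists a completely decomposable torsion-free abelian group that is Dedekind-finite but not Bassian-finite. In fact, if (A_i)_{i<ω} are torsion-free rank-1 groups whose types are strictly increasing (for each i there is an injective homomorphism A_i → A_{i+1} but no injective homomorphism A_{i+1} → A_i), then G = ⊕_{i<ω} A_i is Dedekind-finite but not Bassian-finite. -/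
open DirectSum TensorProduct

/-- An abelian group `G` is *Dedekind-finite* if there is no isomorphism from `G`
onto a proper direct summand of `G`. -/
def DedekindFinite (G : Type*) [AddCommGroup G] : Prop :=
  ∀ A B : AddSubgroup G, IsCompl A B → B ≠ ⊥ → IsEmpty (G ≃+ A)

/-- A monoid is torsion-free if no nontrivial elements have finite order
(the definition `AddMonoid.IsTorsionFree` of the older Mathlib, removed since). -/
def AddMonoid.IsTorsionFree (G : Type*) [AddMonoid G] : Prop :=
  ∀ g : G, g ≠ 0 → ¬IsOfFinAddOrder g

/-! A nonzero homomorphism out of a rank-one torsion-free group is injective, so strictly ascending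
types force every homomorphism `A j → A i` with `i < j` to vanish. Hence every endomorphism of
`G = ⨁ i, A i` preserves `⨁ i ≥ N, A i`, and compressing to the first `N` summands is a ring
homomorphism from `End G` to the endomorphisms of a torsion-free group of finite rank. That ring is
Dedekind-finite: a one-sided inverse survives `ℚ ⊗ -`, where finite dimension makes it two-sided.
If `G = A ⊕ B` with `G ≅ A`, there are `f g e` with `g f = 1`, `f g + e = 1` and `e` the identity
on `B`; after compression `f g = 1`, so `e` dies, which fails once `N` exceeds the support of some
nonzero `b ∈ B`. On the other hand, shifting along the embeddings `A i ↪ A (i + 1)` embeds `G`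
into the proper summand `⨁ i ≥ 1, A i`. -/

theorem AddMonoid.IsTorsionFree.isAddTorsionFree {M : Type*} [AddCommGroup M]
    (h : AddMonoid.IsTorsionFree M) : IsAddTorsionFree M :=
  IsAddTorsionFree.of_not_isOfFinAddOrder fun a ha => h a ha

section RationalTensor

variable {M N : Type*} [AddCommGroup M] [AddCommGroup N]

theorem injective_one_tmul_rat [IsAddTorsionFree M] :
    Function.Injective (TensorProduct.mk ℤ ℚ M 1) := by
  have := Module.Flat.rTensor_preserves_injective_linearMap (M := M)
    (Algebra.linearMap ℤ ℚ) (IsFractionRing.injective ℤ ℚ)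
  convert this.comp (TensorProduct.lid ℤ M).symm.injective
  ext x
  simp

theorem one_tmul_rat_eq_zero_iff [IsAddTorsionFree M] {x : M} :
    (1 : ℚ) ⊗ₜ[ℤ] x = 0 ↔ x = 0 :=
  injective_one_tmul_rat.eq_iff' (tmul_zero _ _)

theorem nontrivial_of_rank_rat_tensor_eq_one_s13 (hM : Module.rank ℚ (ℚ ⊗[ℤ] M) = 1) :
    Nontrivial M := by
  by_contra h
  rw [not_nontrivial_iff_subsingleton] at h
  simp [rank_subsingleton'] at hM

theorem AddMonoidHom.injective_of_rank_rat_tensor_eq_one [IsAddTorsionFree M]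
    [IsAddTorsionFree N] (hM : Module.rank ℚ (ℚ ⊗[ℤ] M) = 1) {φ : M →+ N} (hφ : φ ≠ 0) :
    Function.Injective φ := by
  refine (injective_iff_map_eq_zero φ).mpr fun x hx => by_contra fun hx0 => hφ ?_
  have hspan := (finrank_eq_one_iff_of_nonzero' _ (mt one_tmul_rat_eq_zero_iff.mp hx0)).mp
    (Module.finrank_eq_of_rank_eq (by rw [hM, Nat.cast_one]))
  ext a
  obtain ⟨c, hc⟩ := hspan (1 ⊗ₜ a)
  have := congrArg (φ.toIntLinearMap.baseChange ℚ) hc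
  simp only [map_smul, LinearMap.baseChange_tmul, AddMonoidHom.coe_toIntLinearMap, hx,
    tmul_zero, smul_zero] at this
  exact one_tmul_rat_eq_zero_iff.mp this.symm

instance {ι : Type*} [Fintype ι] [DecidableEq ι] {M : ι → Type*} [∀ i, AddCommGroup (M i)]
    [∀ i, Module.Finite ℚ (ℚ ⊗[ℤ] M i)] : Module.Finite ℚ (ℚ ⊗[ℤ] ∀ i, M i) :=
  Module.Finite.equiv (TensorProduct.piRight ℤ ℚ ℚ M).symm

instance [IsAddTorsionFree M] [Module.Finite ℚ (ℚ ⊗[ℤ] M)] :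
    IsDedekindFiniteMonoid (AddMonoid.End M) where
  mul_eq_one_symm {f g} hfg := by
    have hℚ : f.toIntLinearMap.baseChange ℚ * g.toIntLinearMap.baseChange ℚ = 1 := by
      have hℤ : f.toIntLinearMap ∘ₗ g.toIntLinearMap = LinearMap.id :=
        LinearMap.ext fun x => DFunLike.congr_fun hfg x
      rw [Module.End.mul_eq_comp, ← LinearMap.baseChange_comp, hℤ, LinearMap.baseChange_id]
      rfl
    ext x
    apply injective_one_tmul_rat
    have := LinearMap.congr_fun (mul_eq_one_symm hℚ) (1 ⊗ₜ x)
    simp only [Module.End.mul_apply, LinearMap.baseChange_tmul, Module.End.one_apply] at this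
    exact this

end RationalTensor

theorem exists_mul_eq_one_and_add_eq_one_of_isCompl {G : Type*} [AddCommGroup G]
    {A B : AddSubgroup G} (hAB : IsCompl A B) (θ : G ≃+ A) :
    ∃ f g e : AddMonoid.End G, g * f = 1 ∧ f * g + e = 1 ∧ ∀ b ∈ B, e b = b := by
  have hc : IsCompl A.toIntSubmodule B.toIntSubmodule := AddSubgroup.toIntSubmodule.isCompl hAB
  refine ⟨A.subtype.comp θ.toAddMonoidHom,
    θ.symm.toAddMonoidHom.comp (Submodule.projectionOnto _ _ hc).toAddMonoidHom,
    (Submodule.projection _ _ hc.symm).toAddMonoidHom, ?_, ?_, fun b hb => ?_⟩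
  · ext x
    exact θ.symm_apply_eq.mpr (Submodule.projectionOnto_apply_left hc (θ x))
  · ext x
    change ((θ (θ.symm _)) : G) + _ = x
    rw [θ.apply_symm_apply]
    exact Submodule.projection_add_projection_eq_self hc x
  · exact Submodule.projection_apply_left hc.symm ⟨b, hb⟩

def AddMonoid.End.compressRingHom {G M : Type*} [AddCommGroup G] [AddCommGroup M]
    (π : G →+ M) (ι : M →+ G) (hπι : ∀ m, π (ι m) = m)
    (hπ : ∀ (f : AddMonoid.End G) x, π (f (ι (π x))) = π (f x)) :
    AddMonoid.End G →+* AddMonoid.End M where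
  toFun f := π.comp (f.comp ι)
  map_one' := AddMonoidHom.ext hπι
  map_mul' f g := AddMonoidHom.ext fun m => (hπ f (g (ι m))).symm
  map_zero' := AddMonoidHom.ext fun _ => π.map_zero
  map_add' _ _ := AddMonoidHom.ext fun _ => π.map_add _ _

def DescendingHomsVanish (A : ℕ → Type*) [∀ i, AddCommGroup (A i)] : Prop :=
  ∀ ⦃i j⦄, i < j → ∀ φ : A j →+ A i, φ = 0

theorem exists_injective_addMonoidHom_of_le {A : ℕ → Type*} [∀ i, AddCommGroup (A i)]
    (hup : ∀ i, ∃ ψ : A i →+ A (i + 1), Function.Injective ψ) {k l : ℕ} (h : k ≤ l) :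
    ∃ χ : A k →+ A l, Function.Injective χ := by
  induction l, h using Nat.le_induction with
  | base => exact ⟨AddMonoidHom.id _, fun _ _ h => h⟩
  | succ l _ ih =>
    obtain ⟨χ, hχ⟩ := ih
    obtain ⟨ψ, hψ⟩ := hup l
    exact ⟨ψ.comp χ, hψ.comp hχ⟩

theorem descendingHomsVanish_of_strictly_ascending {A : ℕ → Type*} [∀ i, AddCommGroup (A i)]
    [∀ i, IsAddTorsionFree (A i)] (hrk : ∀ i, Module.rank ℚ (ℚ ⊗[ℤ] A i) = 1)
    (hup : ∀ i, ∃ ψ : A i →+ A (i + 1), Function.Injective ψ)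
    (hdown : ∀ i, ¬ ∃ ψ : A (i + 1) →+ A i, Function.Injective ψ) :
    DescendingHomsVanish A := by
  intro i j hij φ
  by_contra hφ
  obtain ⟨χ, hχ⟩ := exists_injective_addMonoidHom_of_le hup hij
  exact hdown i ⟨φ.comp χ, (φ.injective_of_rank_rat_tensor_eq_one (hrk j) hφ).comp hχ⟩

namespace DirectSum

variable {A : ℕ → Type*} [∀ i, AddCommGroup (A i)]

def truncate (N : ℕ) : (⨁ i, A i) →+ ∀ i : Fin N, A i :=
  AddMonoidHom.pi fun i => (component ℤ ℕ A i).toAddMonoidHom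

def ofPiFin (N : ℕ) : (∀ i : Fin N, A i) →+ ⨁ i, A i :=
  ∑ i : Fin N, (of A i).comp (Pi.evalAddMonoidHom _ i)

@[simp]
theorem truncate_apply (N : ℕ) (x : ⨁ i, A i) (i : Fin N) : truncate N x i = x i :=
  rfl

theorem truncate_ofPiFin (N : ℕ) (m : ∀ i : Fin N, A i) : truncate N (ofPiFin N m) = m := by
  funext i
  rw [truncate_apply, ofPiFin, AddMonoidHom.finsetSum_apply, DFinsupp.finsetSum_apply,
    Finset.sum_eq_single i]
  · exact of_eq_same _ _
  · intro j _ hji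
    exact of_eq_of_ne _ _ _ (Fin.val_injective.ne hji.symm)
  · simp

theorem apply_eq_zero_of_descendingHomsVanish (hdesc : DescendingHomsVanish A)
    (f : AddMonoid.End (⨁ i, A i)) {x : ⨁ i, A i} {i : ℕ} (hx : ∀ j ≤ i, x j = 0) :
    f x i = 0 := by
  classical
  rw [← sum_support_of x, map_sum, DFinsupp.finsetSum_apply]
  refine Finset.sum_eq_zero fun j _ => ?_
  rcases le_or_gt j i with hji | hij
  · rw [hx j hji, map_zero, map_zero, zero_apply]
  · exact DFunLike.congr_fun (hdesc hij ((component ℤ ℕ A i).toAddMonoidHom.comp (f.comp (of A j))))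
      (x j)

theorem truncate_apply_ofPiFin_truncate (hdesc : DescendingHomsVanish A)
    {N : ℕ} (f : AddMonoid.End (⨁ i, A i)) (x : ⨁ i, A i) :
    truncate N (f (ofPiFin N (truncate N x))) = truncate N (f x) := by
  funext i
  rw [truncate_apply, truncate_apply, ← sub_eq_zero, ← sub_apply, ← map_sub]
  exact apply_eq_zero_of_descendingHomsVanish hdesc f fun j hj => by
    rw [sub_apply, sub_eq_zero]
    exact congrFun (truncate_ofPiFin N (truncate N x)) ⟨j, by omega⟩

def truncateRingHom (hdesc : DescendingHomsVanish A) (N : ℕ) :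
    AddMonoid.End (⨁ i, A i) →+* AddMonoid.End (∀ i : Fin N, A i) :=
  AddMonoid.End.compressRingHom (truncate N) (ofPiFin N) (truncate_ofPiFin N)
    (truncate_apply_ofPiFin_truncate hdesc)

theorem truncateRingHom_apply_truncate (hdesc : DescendingHomsVanish A)
    {N : ℕ} (f : AddMonoid.End (⨁ i, A i)) (x : ⨁ i, A i) :
    truncateRingHom hdesc N f (truncate N x) = truncate N (f x) :=
  truncate_apply_ofPiFin_truncate hdesc f x

theorem isCompl_ker_component_range_of {ι : Type*} [DecidableEq ι] {β : ι → Type*}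
    [∀ i, AddCommGroup (β i)] (i : ι) :
    IsCompl (component ℤ ι β i).toAddMonoidHom.ker (of β i).range := by
  constructor
  · rw [AddSubgroup.disjoint_def]
    rintro _ hx ⟨a, rfl⟩
    change (of β i a) i = 0 at hx
    rw [of_eq_same] at hx
    rw [hx, map_zero]
  · rw [codisjoint_iff_le_sup]
    intro x _
    rw [← sub_add_cancel x (of β i (x i))]
    refine AddSubgroup.add_mem_sup ?_ ⟨x i, rfl⟩
    change (x - of β i (x i)) i = 0
    rw [sub_apply, of_eq_same, sub_self]

def shift (ψ : ∀ i, A i →+ A (i + 1)) : (⨁ i, A i) →+ ⨁ i, A i :=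
  toAddMonoid fun i => (of A (i + 1)).comp (ψ i)

theorem shift_apply_zero (ψ : ∀ i, A i →+ A (i + 1)) (x : ⨁ i, A i) : shift ψ x 0 = 0 := by
  induction x using DirectSum.induction_on with
  | zero => simp
  | of i a =>
    rw [shift, toAddMonoid_of, AddMonoidHom.comp_apply]
    exact of_eq_of_ne _ _ _ (Nat.succ_ne_zero i).symm
  | add x y hx hy => rw [map_add, add_apply, hx, hy, add_zero]

theorem shift_apply_succ (ψ : ∀ i, A i →+ A (i + 1)) (x : ⨁ i, A i) (j : ℕ) :
    shift ψ x (j + 1) = ψ j (x j) := by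
  induction x using DirectSum.induction_on with
  | zero => simp
  | of i a =>
    rw [shift, toAddMonoid_of]
    rcases eq_or_ne i j with rfl | hij
    · simp
    · rw [AddMonoidHom.comp_apply, of_eq_of_ne _ _ _ (by omega), of_eq_of_ne _ _ _ hij.symm,
        map_zero]
  | add x y hx hy => rw [map_add, add_apply, add_apply, hx, hy, map_add]

theorem shift_injective {ψ : ∀ i, A i →+ A (i + 1)} (hψ : ∀ i, Function.Injective (ψ i)) :
    Function.Injective (shift ψ) := by
  refine (injective_iff_map_eq_zero _).mpr fun x hx => DFinsupp.ext fun j => ?_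
  apply hψ j
  rw [← shift_apply_succ, hx, zero_apply, zero_apply, map_zero]

end DirectSum

theorem not_bassianFinite_directSum_of_injective {A : ℕ → Type*} [∀ i, AddCommGroup (A i)]
    [Nontrivial (A 0)] {ψ : ∀ i, A i →+ A (i + 1)} (hψ : ∀ i, Function.Injective (ψ i)) :
    ¬ BassianFinite (⨁ i, A i) := by
  intro H
  refine H _ _ (isCompl_ker_component_range_of 0) ?_
    ((shift ψ).codRestrict _ (shift_apply_zero ψ)) fun x y h => shift_injective hψ congr($h.1)
  obtain ⟨a, ha⟩ := exists_ne (0 : A 0)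
  refine AddSubgroup.ne_bot_iff_exists_ne_zero.mpr ⟨⟨of A 0 a, a, rfl⟩, fun h => ha ?_⟩
  exact of_injective 0 (by simpa using congr($h.1))

theorem dedekindFinite_directSum_of_descendingHomsVanish {A : ℕ → Type*}
    [∀ i, AddCommGroup (A i)] [∀ i, IsAddTorsionFree (A i)] [∀ i, Module.Finite ℚ (ℚ ⊗[ℤ] A i)]
    (hdesc : DescendingHomsVanish A) : DedekindFinite (⨁ i, A i) := by
  intro A' B hAB hB
  refine ⟨fun θ => ?_⟩
  obtain ⟨f, g, e, hgf, hfge, heB⟩ := exists_mul_eq_one_and_add_eq_one_of_isCompl hAB θ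
  obtain ⟨⟨b, hbB⟩, hb⟩ := AddSubgroup.ne_bot_iff_exists_ne_zero.mp hB
  obtain ⟨i, hi⟩ : ∃ i, b i ≠ 0 := by
    by_contra! h
    exact hb (Subtype.ext (DFinsupp.ext h))
  set ρ := truncateRingHom hdesc (i + 1)
  have hfg : ρ f * ρ g = 1 := mul_eq_one_symm (by rw [← map_mul, hgf, map_one])
  have hρe : ρ e = 0 := by
    calc ρ e = ρ (f * g) + ρ e - ρ (f * g) := by abel
      _ = 1 - 1 := by rw [← map_add, hfge, map_one, map_mul, hfg]
      _ = 0 := sub_self 1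
  have h := DFunLike.congr_fun hρe (truncate (i + 1) b)
  rw [truncateRingHom_apply_truncate, heB b hbB] at h
  exact hi (congrFun h ⟨i, i.lt_succ_self⟩)

/-- If `(A i)_{i < ω}` are torsion-free rank-1 abelian groups with strictly increasing
types (for each `i` there is an injective homomorphism `A i → A (i+1)` but no injective
homomorphism `A (i+1) → A i`), then `G = ⨁ i, A i` is a completely decomposable
torsion-free abelian group that is Dedekind-finite but not Bassian-finite. -/
theorem dedekindFinite_not_bassianFinite_of_strictly_ascending_types
    (A : ℕ → Type*) [∀ i, AddCommGroup (A i)]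
    (htf : ∀ i, AddMonoid.IsTorsionFree (A i))
    (hrk : ∀ i, Module.rank ℚ (ℚ ⊗[ℤ] A i) = 1)
    (hup : ∀ i, ∃ ψ : A i →+ A (i + 1), Function.Injective ψ)
    (hdown : ∀ i, ¬ ∃ ψ : A (i + 1) →+ A i, Function.Injective ψ) :
    DedekindFinite (⨁ i, A i) ∧ ¬ BassianFinite (⨁ i, A i) := by
  have : ∀ i, IsAddTorsionFree (A i) := fun i => (htf i).isAddTorsionFree
  have : ∀ i, Module.Finite ℚ (ℚ ⊗[ℤ] A i) := fun i => Module.finite_of_rank_eq_one (hrk i)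
  have : Nontrivial (A 0) := nontrivial_of_rank_rat_tensor_eq_one_s13 (hrk 0)
  have hdesc := descendingHomsVanish_of_strictly_ascending hrk hup hdown
  choose ψ hψ using hup
  exact ⟨dedekindFinite_directSum_of_descendingHomsVanish hdesc,
    not_bassianFinite_directSum_of_injective hψ⟩
end

section
/- There exists a torsion-free abelian group that is Bassian-finite but not relatively co-Hopfian (and in particular not co-Hopfian). In fact, if α is a p-adic integer transcendental over ℚ and G is the p-pure closure of the subring ℤ[α] in the p-adic integers (G = {β in the p-adic integers : p^j β ∈ ℤ[α] for some j}), then G is indecomposable (hence Bassian-finite) but multiplication by α is an injective endomorphism of G whose image is not essential in G. -/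
/-- An abelian group `G` is *co-Hopfian* if every injective endomorphism of `G`
is surjective. -/
def CoHopfian (G : Type*) [AddCommGroup G] : Prop :=
  ∀ φ : G →+ G, Function.Injective φ → Function.Surjective φ

/-- An abelian group is *indecomposable* if in any internal direct sum decomposition
`G = A ⊕ B`, one of the summands is zero. -/
def IndecomposableAddGroup (G : Type*) [AddCommGroup G] : Prop :=
  ∀ A B : AddSubgroup G, IsCompl A B → A = ⊥ ∨ B = ⊥

/-- The `p`-pure closure of the subring `ℤ[α]` inside the `p`-adic integers:
`{β : ℤ_[p] | p ^ j * β ∈ ℤ[α] for some j ∈ ℕ}`, as an additive subgroup. -/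
def padicPureClosure (p : ℕ) [Fact p.Prime] (α : ℤ_[p]) : AddSubgroup ℤ_[p] where
  carrier := {β : ℤ_[p] | ∃ j : ℕ, (p : ℤ_[p]) ^ j * β ∈ Algebra.adjoin ℤ ({α} : Set ℤ_[p])}
  zero_mem' := ⟨0, by simpa using Subalgebra.zero_mem _⟩
  add_mem' := by
    rintro a b ⟨j, hj⟩ ⟨k, hk⟩
    refine ⟨j + k, ?_⟩
    have h1 : (p : ℤ_[p]) ^ (j + k) * (a + b) =
        (p : ℤ_[p]) ^ k * ((p : ℤ_[p]) ^ j * a) + (p : ℤ_[p]) ^ j * ((p : ℤ_[p]) ^ k * b) := by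
      ring
    rw [h1]
    exact add_mem (mul_mem (pow_mem (natCast_mem _ p) k) hj)
      (mul_mem (pow_mem (natCast_mem _ p) j) hk)
  neg_mem' := by
    rintro a ⟨j, hj⟩
    exact ⟨j, by simpa [mul_neg] using neg_mem hj⟩

/-!
For a subgroup `G ≤ ℤ_[p]` containing `1` and closed under division by `p`, every additive map
`φ : G → ℤ_[p]` is multiplication by `φ 1`: writing `x = a + p ^ n * w` with `a ∈ ℕ` puts `w` in
`G`, so `φ x - x * φ 1` is divisible by every power of `p`. Idempotent endomorphisms of `G` are
therefore multiplication by `0` or `1`, and `G` is indecomposable.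

If `α * x = n ∈ ℤ` with `p ^ j * x = P(α)`, transcendence of `α` gives `X * P = p ^ j * n` in
`ℤ[X]`, so `n = 0`: multiplication by `α` is injective but its image misses `ℤ ≤ G`.
-/

theorem PadicInt.eq_zero_of_forall_pow_dvd {p : ℕ} [Fact p.Prime] {x : ℤ_[p]}
    (h : ∀ n : ℕ, (p : ℤ_[p]) ^ n ∣ x) : x = 0 := by
  by_contra hx
  exact (FiniteMultiplicity.not_iff_forall.mpr h) (.of_not_isUnit PadicInt.p_nonunit hx)

theorem Transcendental.eq_zero_of_mul_mem_adjoin_eq_intCast {R : Type*} [CommRing R] {α : R}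
    (hα : Transcendental ℤ α) {y : R} (hy : y ∈ Algebra.adjoin ℤ {α}) {n : ℤ}
    (h : α * y = n) : n = 0 := by
  obtain ⟨P, rfl⟩ := (Algebra.adjoin_singleton_eq_range_aeval ℤ α).le hy
  have hP : Polynomial.X * P = Polynomial.C n :=
    transcendental_iff_injective.mp hα (by simpa using h)
  simpa using (congrArg (Polynomial.coeff · 0) hP).symm

theorem IndecomposableAddGroup.of_forall_idempotent {G : Type*} [AddCommGroup G]
    (h : ∀ e : G →+ G, (∀ x, e (e x) = e x) → e = 0 ∨ e = AddMonoidHom.id G) :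
    IndecomposableAddGroup G := by
  intro A B hAB
  have hAB' : IsCompl A.toIntSubmodule B.toIntSubmodule := (OrderIso.isCompl_iff _).mp hAB
  let e := (Submodule.projection _ _ hAB').toAddMonoidHom
  have he : ∀ x, e (e x) = e x := fun x =>
    Submodule.projection_apply_of_mem_left hAB' (Submodule.projection_apply_mem hAB' x)
  rcases h e he with h0 | hid
  · refine Or.inl (AddSubgroup.eq_bot_iff_forall _ |>.mpr fun a ha => ?_)
    calc a = e a := (Submodule.projection_apply_of_mem_left hAB' ha).symm
      _ = 0 := DFunLike.congr_fun h0 a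
  · refine Or.inr (AddSubgroup.eq_bot_iff_forall _ |>.mpr fun b hb => ?_)
    calc b = e b := (DFunLike.congr_fun hid b).symm
      _ = 0 := Submodule.projection_apply_of_mem_right hAB' hb

theorem IndecomposableAddGroup.bassianFinite {G : Type*} [AddCommGroup G] [Nontrivial G]
    (hG : IndecomposableAddGroup G) : BassianFinite G := by
  intro A B hAB hB φ hφ
  obtain rfl := (hG A B hAB).resolve_right hB
  obtain ⟨x, y, hxy⟩ := exists_pair_ne G
  exact hxy (hφ (Subsingleton.elim _ _))

theorem CoHopfian.relativelyCoHopfian {G : Type*} [AddCommGroup G] (hG : CoHopfian G) :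
    RelativelyCoHopfian G := by
  intro φ hφ B hB
  rwa [AddMonoidHom.range_eq_top.mpr (hG φ hφ), top_inf_eq]

namespace PadicInt

variable {p : ℕ} [Fact p.Prime] {G : AddSubgroup ℤ_[p]}

theorem addMonoidHom_apply_eq_mul_of_pure (h1 : (1 : ℤ_[p]) ∈ G)
    (hpure : ∀ (n : ℕ) (y : ℤ_[p]), (p : ℤ_[p]) ^ n * y ∈ G → y ∈ G)
    (φ : G →+ ℤ_[p]) (x : G) : φ x = x * φ ⟨1, h1⟩ := by
  rw [← sub_eq_zero]
  refine eq_zero_of_forall_pow_dvd fun n => ?_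
  obtain ⟨w, hw⟩ := Ideal.mem_span_singleton.mp (appr_spec n (x : ℤ_[p]))
  have hwG : w ∈ G := hpure n w <| hw ▸ sub_mem x.2 (by simpa using nsmul_mem h1 _)
  have hx : x = (x : ℤ_[p]).appr n • (⟨1, h1⟩ : G) + p ^ n • ⟨w, hwG⟩ := by
    ext
    simp [← hw]
  refine ⟨φ ⟨w, hwG⟩ - w * φ ⟨1, h1⟩, ?_⟩
  conv_lhs => rw [hx]
  simp only [map_add, map_nsmul, AddSubgroup.coe_add, AddSubgroup.coe_nsmul, nsmul_eq_mul]
  push_cast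
  ring

theorem indecomposableAddGroup_of_pure (h1 : (1 : ℤ_[p]) ∈ G)
    (hpure : ∀ (n : ℕ) (y : ℤ_[p]), (p : ℤ_[p]) ^ n * y ∈ G → y ∈ G) :
    IndecomposableAddGroup G := by
  refine .of_forall_idempotent fun e he => ?_
  set c : ℤ_[p] := ↑(e ⟨1, h1⟩)
  have he_mul (x : G) : (e x : ℤ_[p]) = x * c :=
    addMonoidHom_apply_eq_mul_of_pure h1 hpure (G.subtype.comp e) x
  have hc : c * c = c := by
    simpa [he_mul] using congrArg Subtype.val (he ⟨1, h1⟩)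
  rcases IsIdempotentElem.iff_eq_zero_or_one.mp hc with hc0 | hc1
  · exact Or.inl <| AddMonoidHom.ext fun x => Subtype.ext <| by simp [he_mul, hc0]
  · exact Or.inr <| AddMonoidHom.ext fun x => Subtype.ext <| by simp [he_mul, hc1]

end PadicInt

namespace padicPureClosure

variable {p : ℕ} [Fact p.Prime] {α : ℤ_[p]}

theorem one_mem : (1 : ℤ_[p]) ∈ padicPureClosure p α :=
  ⟨0, by simp⟩

instance : Nontrivial (padicPureClosure p α) :=
  ⟨⟨⟨1, one_mem⟩, 0, fun h => one_ne_zero (congrArg Subtype.val h)⟩⟩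

theorem mem_of_pow_mul_mem {n : ℕ} {y : ℤ_[p]} (h : (p : ℤ_[p]) ^ n * y ∈ padicPureClosure p α) :
    y ∈ padicPureClosure p α := by
  obtain ⟨j, hj⟩ := h
  exact ⟨j + n, by rwa [pow_add, mul_assoc]⟩

theorem mul_mem {β : ℤ_[p]} (hβ : β ∈ padicPureClosure p α) : α * β ∈ padicPureClosure p α := by
  obtain ⟨j, hj⟩ := hβ
  refine ⟨j, ?_⟩
  rw [mul_left_comm]
  exact Subalgebra.mul_mem _ (Algebra.self_mem_adjoin_singleton ℤ α) hj

variable (p α) in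
noncomputable def mulLeft : padicPureClosure p α →+ padicPureClosure p α :=
  ((AddMonoidHom.mulLeft α).comp (padicPureClosure p α).subtype).codRestrict _ fun x => mul_mem x.2

@[simp] theorem coe_mulLeft (x : padicPureClosure p α) : (mulLeft p α x : ℤ_[p]) = α * x := rfl

theorem mulLeft_injective (hα : α ≠ 0) : Function.Injective (mulLeft p α) :=
  fun _ _ h => Subtype.ext (mul_left_cancel₀ hα (congrArg Subtype.val h))

theorem eq_zero_of_mul_eq_intCast (hα : Transcendental ℤ α) {β : ℤ_[p]}
    (hβ : β ∈ padicPureClosure p α) {n : ℤ} (h : α * β = n) : n = 0 := by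
  obtain ⟨j, hj⟩ := hβ
  have := hα.eq_zero_of_mul_mem_adjoin_eq_intCast hj (n := p ^ j * n) <| by
    rw [mul_left_comm, h]
    push_cast
    rfl
  simpa [(Fact.out : p.Prime).ne_zero] using this

theorem range_mulLeft_inf_zmultiples_one (hα : Transcendental ℤ α) :
    (mulLeft p α).range ⊓ AddSubgroup.zmultiples ⟨1, one_mem⟩ = ⊥ := by
  refine (AddSubgroup.eq_bot_iff_forall _).mpr ?_
  rintro _ ⟨⟨x, rfl⟩, n, hn⟩
  have hn0 : n = 0 := eq_zero_of_mul_eq_intCast hα x.2 <| by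
    simpa using (congrArg Subtype.val hn).symm
  simpa [hn0] using hn.symm

end padicPureClosure

/-- If `α` is a `p`-adic integer transcendental over the rationals (equivalently, over
`ℤ`) and `G` is the `p`-pure closure of `ℤ[α]` in `ℤ_[p]`, then `G` is a torsion-free
abelian group which is indecomposable, hence Bassian-finite, but neither relatively
co-Hopfian nor co-Hopfian: multiplication by `α` is an injective endomorphism of `G`
whose image is not essential in `G`. -/
theorem padicPureClosure_bassianFinite_not_relativelyCoHopfian
    (p : ℕ) [Fact p.Prime] (α : ℤ_[p]) (hα : Transcendental ℤ α) :
    (∀ g : padicPureClosure p α, g ≠ 0 → ¬IsOfFinAddOrder g) ∧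
    IndecomposableAddGroup (padicPureClosure p α) ∧
    BassianFinite (padicPureClosure p α) ∧
    ¬ RelativelyCoHopfian (padicPureClosure p α) ∧
    ¬ CoHopfian (padicPureClosure p α) ∧
    ∃ φ : (padicPureClosure p α : Type) →+ (padicPureClosure p α : Type),
      (∀ x : padicPureClosure p α, (φ x : ℤ_[p]) = α * (x : ℤ_[p])) ∧
      Function.Injective φ ∧
      ∃ B : AddSubgroup (padicPureClosure p α), B ≠ ⊥ ∧ φ.range ⊓ B = ⊥ := by
  have hindec : IndecomposableAddGroup (padicPureClosure p α) :=
    PadicInt.indecomposableAddGroup_of_pure padicPureClosure.one_mem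
      fun _ _ => padicPureClosure.mem_of_pow_mul_mem
  have hα0 : α ≠ 0 := by
    rintro rfl
    exact hα isAlgebraic_zero
  have hinj := padicPureClosure.mulLeft_injective (p := p) hα0
  have hB : AddSubgroup.zmultiples (⟨1, padicPureClosure.one_mem⟩ : padicPureClosure p α) ≠ ⊥ :=
    fun h => one_ne_zero (congrArg Subtype.val ((AddSubgroup.zmultiples_eq_bot).mp h))
  have hdisj := padicPureClosure.range_mulLeft_inf_zmultiples_one hα
  have hnotRel : ¬ RelativelyCoHopfian (padicPureClosure p α) :=
    fun h => h _ hinj _ hB hdisj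
  exact ⟨fun _ => not_isOfFinAddOrder_of_isAddTorsionFree, hindec, hindec.bassianFinite, hnotRel,
    mt CoHopfian.relativelyCoHopfian hnotRel, _, padicPureClosure.coe_mulLeft, hinj, _, hB, hdisj⟩
end

section
/- If an abelian group G has finite injective rank, then G is relatively co-Hopfian. -/
/-- An abelian group `G` has *finite injective rank* if an endomorphism `φ` of `G`
is injective exactly when the quotient `G / φ(G)` is finite. -/
def FiniteInjectiveRank (G : Type*) [AddCommGroup G] : Prop :=
  ∀ φ : G →+ G, Function.Injective φ ↔ Finite (G ⧸ φ.range)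

/-!
If `φ` is injective then `G ⧸ φ(G)` is finite, so a subgroup `B` with `φ(G) ⊓ B = ⊥` embeds
in it; if `B ≠ ⊥` it contains some `b ≠ 0` with `p • b = 0`, `p` prime. Finite injective rank
forbids nonzero fixed points of endomorphisms `ℓ ∘ σ` factoring through a finite group, because
`id - ℓ ∘ σ` is the identity on the finite-index subgroup `ker σ`. If `p^(m+1) • x = 0` but
`p^m • x ∉ p^(m+1) • G`, a character of `G ⧸ p^(m+1) • G` yields `σ : G → ℤ/p^(m+1)` with
`σ x = 1`, and `ℓ` sends `1` to `x`. Hence `b` is divisible by every power of `p`; dividing it by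
the `p`-part of `|G ⧸ φ(G)|` shows that its image there has order prime to `p`, so `b ∈ φ(G)`.
-/

theorem AddCircle.mem_zmultiples_of_nsmul_eq_zero {𝕜 : Type*} [AddCommGroup 𝕜]
    [IsAddTorsionFree 𝕜] {p : 𝕜} {u t : AddCircle p} {n : ℕ} (hn : n ≠ 0)
    (hu : addOrderOf u = n) (ht : n • t = 0) : t ∈ AddSubgroup.zmultiples u := by
  have hfin : (AddSubgroup.zmultiples u : Set (AddCircle p)).Finite :=
    (addOrderOf_pos_iff.mp (hu ▸ Nat.pos_of_ne_zero hn)).finite_zmultiples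
  have hsub : (AddSubgroup.zmultiples u : Set (AddCircle p)) ⊆ {t | n • t = 0} := by
    rintro _ ⟨k, rfl⟩
    simp [← hu, smul_comm (addOrderOf u) k u]
  have hcard : (AddSubgroup.zmultiples u : Set (AddCircle p)).encard = n := by
    rw [← hfin.cast_ncard_eq, ← Nat.card_coe_set_eq, SetLike.coe_sort_coe, Nat.card_zmultiples,
      hu]
  have := hfin.eq_of_subset_of_encard_le hsub
    (hcard ▸ card_torsion_le_of_isSMulRegular p n hn (nsmul_right_injective hn))
  rw [← SetLike.mem_coe, this]
  exact ht

theorem exists_prime_nsmul_eq_zero_of_nontrivial (A : Type*) [AddGroup A] [Finite A]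
    [Nontrivial A] : ∃ p : ℕ, p.Prime ∧ ∃ a : A, a ≠ 0 ∧ p • a = 0 := by
  have hp := Nat.minFac_prime (Finite.one_lt_card (α := A)).ne'
  have := Fact.mk hp
  obtain ⟨a, ha⟩ := exists_prime_addOrderOf_dvd_card' _ (Nat.minFac_dvd (Nat.card A))
  exact ⟨_, hp, a, fun h0 => hp.one_lt.ne' (by simp [← ha, h0]),
    ha ▸ addOrderOf_nsmul_eq_zero a⟩

section

variable {G : Type*} [AddCommGroup G]

theorem AddSubgroup.finite_of_inf_eq_bot {H B : AddSubgroup G} [Finite (G ⧸ H)]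
    (hHB : H ⊓ B = ⊥) : Finite B := by
  refine Finite.of_injective ((QuotientAddGroup.mk' H).comp B.subtype) ?_
  rw [injective_iff_map_eq_zero]
  intro b hb
  have : (b : G) ∈ H ⊓ B := ⟨(QuotientAddGroup.eq_zero_iff _).mp hb, b.2⟩
  rw [hHB, AddSubgroup.mem_bot] at this
  exact Subtype.ext this

theorem AddSubgroup.mem_of_forall_exists_pow_nsmul_eq {H : AddSubgroup G} [Finite (G ⧸ H)]
    {p : ℕ} (hp : p.Prime) {y : G} (hy : p • y = 0)
    (hdiv : ∀ k : ℕ, ∃ w : G, p ^ k • w = y) : y ∈ H := by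
  set N := Nat.card (G ⧸ H)
  have hN : N ≠ 0 := Nat.card_pos.ne'
  obtain ⟨w, rfl⟩ := hdiv (N.factorization p)
  rw [← QuotientAddGroup.eq_zero_iff, ← AddMonoid.addOrderOf_eq_one_iff]
  apply Nat.eq_one_of_dvd_coprimes (Nat.coprime_ordCompl hp hN)
  · exact addOrderOf_dvd_of_nsmul_eq_zero (by rw [← QuotientAddGroup.mk_nsmul, hy]; rfl)
  · apply addOrderOf_dvd_of_nsmul_eq_zero
    rw [← QuotientAddGroup.mk_nsmul, ← mul_nsmul, Nat.ordProj_mul_ordCompl_eq_self,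
      QuotientAddGroup.mk_nsmul]
    exact card_nsmul_eq_zero'

theorem exists_addMonoidHom_zmod_apply_eq_one {p m : ℕ} [Fact p.Prime] {x : G}
    (hx : p ^ m • x ∉ (nsmulAddMonoidHom (p ^ (m + 1)) : G →+ G).range) :
    ∃ σ : G →+ ZMod (p ^ (m + 1)), σ x = 1 := by
  set P := (nsmulAddMonoidHom (p ^ (m + 1)) : G →+ G).range
  obtain ⟨c, hc⟩ := CharacterModule.exists_character_apply_ne_zero_of_ne_zero
    (a := ((p ^ m • x : G) : G ⧸ P)) (by rwa [Ne, QuotientAddGroup.eq_zero_iff])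
  let g : G →+ AddCircle (1 : ℚ) := c.comp (QuotientAddGroup.mk' P)
  have hg : ∀ y, p ^ (m + 1) • g y = 0 := fun y => by
    rw [← map_nsmul]
    show c (QuotientAddGroup.mk' P (p ^ (m + 1) • y)) = 0
    have hy : p ^ (m + 1) • y ∈ P := ⟨y, rfl⟩
    rw [QuotientAddGroup.mk'_apply, (QuotientAddGroup.eq_zero_iff _).mpr hy, map_zero]
  have hu : addOrderOf (g x) = p ^ (m + 1) :=
    addOrderOf_eq_prime_pow (by rwa [← map_nsmul]) (hg x)
  have hmem : ∀ y, g y ∈ AddSubgroup.zmultiples (g x) := fun y =>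
    AddCircle.mem_zmultiples_of_nsmul_eq_zero (pow_ne_zero _ (Fact.out : p.Prime).ne_zero) hu (hg y)
  have hgen : ∀ t : AddSubgroup.zmultiples (g x),
      t ∈ AddSubgroup.zmultiples ⟨g x, AddSubgroup.mem_zmultiples _⟩ := by
    rintro ⟨_, k, rfl⟩
    exact ⟨k, rfl⟩
  have hcard : Nat.card (AddSubgroup.zmultiples (g x)) = p ^ (m + 1) :=
    (Nat.card_zmultiples (g x)).trans hu
  exact ⟨(zmodAddEquivOfGenerator hgen hcard).symm.toAddMonoidHom.comp (g.codRestrict _ hmem),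
    zmodAddEquivOfGenerator_symm_apply_generator hgen hcard⟩

theorem FiniteInjectiveRank.eq_zero_of_apply_apply_eq_self (h : FiniteInjectiveRank G)
    {A : Type*} [AddCommGroup A] [Finite A] (σ : G →+ A) (ℓ : A →+ G) {x : G}
    (hx : ℓ (σ x) = x) : x = 0 := by
  let ψ : G →+ G := AddMonoidHom.id G - ℓ.comp σ
  have hker : σ.ker ≤ ψ.range := fun y hy => ⟨y, by simp [ψ, AddMonoidHom.mem_ker.mp hy]⟩
  have : ψ.range.FiniteIndex := AddSubgroup.finiteIndex_of_le hker
  have hψ : Function.Injective ψ := (h ψ).mpr AddSubgroup.finite_quotient_of_finiteIndex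
  exact hψ (by simp [ψ, hx])

theorem FiniteInjectiveRank.pow_nsmul_mem_range_nsmul (h : FiniteInjectiveRank G) {p m : ℕ}
    (hp : p.Prime) {x : G} (hx : p ^ (m + 1) • x = 0) :
    p ^ m • x ∈ (nsmulAddMonoidHom (p ^ (m + 1)) : G →+ G).range := by
  have := Fact.mk hp
  by_contra hx'
  obtain ⟨σ, hσ⟩ := exists_addMonoidHom_zmod_apply_eq_one hx'
  let ℓ : ZMod (p ^ (m + 1)) →+ G :=
    ZMod.lift _ ⟨zmultiplesHom G x, by rw [zmultiplesHom_apply, natCast_zsmul, hx]⟩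
  have : x = 0 := h.eq_zero_of_apply_apply_eq_self σ ℓ
    (by simpa [hσ] using ZMod.lift_coe _ ⟨zmultiplesHom G x, _⟩ 1)
  exact hx' ⟨0, by simp [this]⟩

theorem FiniteInjectiveRank.exists_pow_nsmul_eq (h : FiniteInjectiveRank G) {p : ℕ}
    (hp : p.Prime) {y : G} (hy : p • y = 0) : ∀ k : ℕ, ∃ w : G, p ^ k • w = y
  | 0 => ⟨y, one_nsmul y⟩
  | k + 1 => by
    obtain ⟨w, rfl⟩ := h.exists_pow_nsmul_eq hp hy k
    exact h.pow_nsmul_mem_range_nsmul hp (by rwa [pow_succ', mul_nsmul'])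

end

/-- Every abelian group of finite injective rank is relatively co-Hopfian. -/
theorem RelativelyCoHopfian.of_finiteInjectiveRank (G : Type*) [AddCommGroup G]
    (h : FiniteInjectiveRank G) : RelativelyCoHopfian G := by
  intro φ hφ B hB hφB
  have : Finite (G ⧸ φ.range) := (h φ).mp hφ
  have : Finite B := AddSubgroup.finite_of_inf_eq_bot hφB
  have : Nontrivial B := (AddSubgroup.nontrivial_iff_ne_bot B).mpr hB
  obtain ⟨p, hp, b, hb, hpb⟩ := exists_prime_nsmul_eq_zero_of_nontrivial B
  have hpb' : p • (b : G) = 0 := congrArg Subtype.val hpb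
  have hbφ : (b : G) ∈ φ.range ⊓ B :=
    ⟨AddSubgroup.mem_of_forall_exists_pow_nsmul_eq hp hpb' (h.exists_pow_nsmul_eq hp hpb'), b.2⟩
  rw [hφB, AddSubgroup.mem_bot] at hbφ
  exact hb (Subtype.ext hbφ)
end

section
/- If an abelian group G has finite injective rank, then G is Bassian-finite. -/
/-!
An injective `φ : G → A ⊆ G` gives an injective endomorphism `ψ` of `G` with `ψ(G) ⊆ A`, so
both `ψ(G)` and `A` have finite index. Precomposing `ψ` with the projection onto `A` along a
nonzero complement `B` yields an endomorphism with image `ψ(A)`, again of finite index since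
`ψ` is injective; finite injective rank then forces it to be injective, yet it kills `B`.
-/

theorem AddSubgroup.exists_range_eq_ker_eq_of_isCompl {G : Type*} [AddCommGroup G]
    {A B : AddSubgroup G} (h : IsCompl A B) : ∃ p : G →+ G, p.range = A ∧ p.ker = B := by
  have h' : IsCompl A.toIntSubmodule B.toIntSubmodule := AddSubgroup.toIntSubmodule.isCompl h
  refine ⟨(A.toIntSubmodule.projection _ h').toAddMonoidHom, ?_, ?_⟩
  · rw [← LinearMap.range_toAddSubgroup, Submodule.range_projection]
    rfl
  · rw [← LinearMap.ker_toAddSubgroup, Submodule.ker_projection]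
    rfl

theorem AddSubgroup.finiteIndex_map_of_injective {G G' : Type*} [AddGroup G] [AddGroup G']
    (H : AddSubgroup G) [H.FiniteIndex] {f : G →+ G'} [f.range.FiniteIndex]
    (hf : Function.Injective f) : (H.map f).FiniteIndex :=
  ⟨by
    rw [H.index_map_of_injective hf]
    exact mul_ne_zero H.index_ne_zero_of_finite f.range.index_ne_zero_of_finite⟩

namespace FiniteInjectiveRank

variable {G : Type*} [AddCommGroup G]

theorem finiteIndex_range (h : FiniteInjectiveRank G) {φ : G →+ G}
    (hφ : Function.Injective φ) : φ.range.FiniteIndex :=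
  AddSubgroup.finiteIndex_iff_finite_quotient.mpr ((h φ).mp hφ)

theorem injective_of_finiteIndex_range (h : FiniteInjectiveRank G) {φ : G →+ G}
    (hφ : φ.range.FiniteIndex) : Function.Injective φ :=
  (h φ).mpr (AddSubgroup.finiteIndex_iff_finite_quotient.mp hφ)

end FiniteInjectiveRank

/-- Every abelian group of finite injective rank is Bassian-finite. -/
theorem BassianFinite.of_finiteInjectiveRank (G : Type*) [AddCommGroup G]
    (h : FiniteInjectiveRank G) : BassianFinite G := by
  intro A B hAB hB φ hφ
  set ψ : G →+ G := A.subtype.comp φ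
  have hψ : Function.Injective ψ := A.subtype_injective.comp hφ
  have : ψ.range.FiniteIndex := h.finiteIndex_range hψ
  have : A.FiniteIndex := AddSubgroup.finiteIndex_of_le (H := ψ.range) <| by
    rintro _ ⟨x, rfl⟩
    exact (φ x).2
  obtain ⟨p, hp_range, hp_ker⟩ := AddSubgroup.exists_range_eq_ker_eq_of_isCompl hAB
  have hχ : Function.Injective (ψ.comp p) := by
    refine h.injective_of_finiteIndex_range ?_
    rw [AddMonoidHom.range_comp, hp_range]
    exact A.finiteIndex_map_of_injective hψ
  apply hB
  rw [← hp_ker, ← AddMonoidHom.ker_comp_of_injective p ψ hψ]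
  exact (AddMonoidHom.ker_eq_bot_iff _).mpr hχ
end
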